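/- arXiv:2504.07456 — 2 statements merged into one kernel-verified Lean document; each statement's English description precedes it below -/
import Mathlib

section
/- For every n ≥ 1, the set W_n of new fractions inserted at step n of the Stern-Brocot construction equals the set of rationals ξ = [0; a_1, a_2, ..., a_t] in [0,1] (finite continued fraction with positive integer partial quotients and a_t ≥ 2) such that a_1 + a_2 + ... + a_t = n + 1. -/
/-!
Let `φ x = x / (x + 1)` and `ψ x = 1 / (x + 1) = 1 - φ x`. Both `φ` and `x ↦ 1 - x` are integer
Möbius maps of determinant `±1`; such maps keep reduced fractions reduced and therefore commute
with mediants. Hence the left half of `F_{n+1}` is `φ(F_n)`, and `x ↦ 1 - x` reverses `F_n`, so for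
`n ≥ 1` we get `W_{n+1} = φ(W_n) ∪ ψ(W_n)`. On continued fractions `φ [0; a_1, a_2, …] =
[0; a_1 + 1, a_2, …]` and `ψ [0; a_1, …] = [0; 1, a_1, …]`; both raise the sum of the partial
quotients by one, and every canonical expansion with sum at least `3` arises in one of these two
ways. Induction from `W_1 = {1/2} = {[0; 2]}` concludes.
-/

/-- The mediant of two rationals, formed from numerators and denominators
of the reduced fractions. -/
def mediant (a b : ℚ) : ℚ := ((a.num + b.num : ℤ) : ℚ) / ((a.den + b.den : ℕ) : ℚ)

/-- `sb n j` is the `j`-th element `ξ_{j,n}` of the Stern–Brocot sequence `F_n`: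
`F_0 = {0/1, 1/1}` and `F_{n+1}` is obtained from `F_n` by inserting the mediant
between every pair of consecutive elements. -/
def sb : ℕ → ℕ → ℚ
  | 0, j => if j = 0 then 0 else 1
  | n + 1, j => if j % 2 = 0 then sb n (j / 2) else mediant (sb n (j / 2)) (sb n (j / 2 + 1))

/-- `sbNew n` is the set `W_n` of new fractions inserted at step `n` of the
Stern–Brocot construction (the elements of odd index in `F_n`). -/
def sbNew (n : ℕ) : Finset ℚ :=
  ((Finset.range (2 ^ n)).filter (fun j => j % 2 = 1)).image (sb n)

/-- The value of the finite continued fraction `[0; a_1, ..., a_t]` given by the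
list `[a_1, ..., a_t]`. -/
def cfVal : List ℕ → ℚ
  | [] => 0
  | a :: l => 1 / ((a : ℚ) + cfVal l)

def moebius (α β γ δ : ℤ) (x : ℚ) : ℚ := (α * x + β) / (γ * x + δ)

section Moebius

variable {α β γ δ : ℤ}

theorem IsCoprime.map_unimodular {p q : ℤ} (h : IsCoprime p q) (hdet : IsUnit (α * δ - β * γ)) :
    IsCoprime (α * p + β * q) (γ * p + δ * q) := by
  obtain ⟨u, v, huv⟩ := h
  -- inverting the matrix writes `p` and `q` as integer combinations of the new pair
  refine ⟨(α * δ - β * γ) * (u * δ - v * γ), (α * δ - β * γ) * (v * α - u * β), ?_⟩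
  linear_combination (α * δ - β * γ) ^ 2 * huv + Int.isUnit_mul_self hdet

theorem num_den_moebius {x : ℚ} (hdet : IsUnit (α * δ - β * γ)) (hx : 0 < γ * x + δ) :
    (moebius α β γ δ x).num = α * x.num + β * x.den ∧
      ((moebius α β γ δ x).den : ℤ) = γ * x.num + δ * x.den := by
  have hden : (0 : ℚ) < x.den := mod_cast x.pos
  have hval : moebius α β γ δ x =
      ((α * x.num + β * x.den : ℤ) : ℚ) / ((γ * x.num + δ * x.den : ℤ) : ℚ) := by
    rw [moebius]
    push_cast
    rw [← Rat.mul_den_eq_num x, div_eq_div_iff hx.ne' (by nlinarith)]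
    ring
  have hpos : 0 < γ * x.num + δ * x.den := by
    have : ((γ * x.num + δ * x.den : ℤ) : ℚ) = (γ * x + δ) * x.den := by
      push_cast; rw [← Rat.mul_den_eq_num x]; ring
    exact_mod_cast this ▸ mul_pos hx hden
  have hcop := Int.isCoprime_iff_gcd_eq_one.mp
    ((Int.isCoprime_iff_gcd_eq_one.mpr x.reduced : IsCoprime x.num x.den).map_unimodular hdet)
  rw [hval]
  exact ⟨Rat.num_div_eq_of_coprime hpos hcop, Rat.den_div_eq_of_coprime hpos hcop⟩

theorem mediant_moebius {a b : ℚ} (hdet : IsUnit (α * δ - β * γ)) (ha : 0 < γ * a + δ)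
    (hb : 0 < γ * b + δ) :
    mediant (moebius α β γ δ a) (moebius α β γ δ b) = moebius α β γ δ (mediant a b) := by
  obtain ⟨hna, hda⟩ := num_den_moebius hdet ha
  obtain ⟨hnb, hdb⟩ := num_den_moebius hdet hb
  have hda' : ((moebius α β γ δ a).den : ℚ) = γ * a.num + δ * a.den := by exact_mod_cast hda
  have hdb' : ((moebius α β γ δ b).den : ℚ) = γ * b.num + δ * b.den := by exact_mod_cast hdb
  have hpa : (0 : ℚ) < a.den := mod_cast a.pos
  have hpb : (0 : ℚ) < b.den := mod_cast b.pos
  have hsum : (0 : ℚ) < γ * (a.num + b.num) + δ * (a.den + b.den) := by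
    rw [← Rat.mul_den_eq_num a, ← Rat.mul_den_eq_num b]
    nlinarith [mul_pos ha hpa, mul_pos hb hpb]
  rw [mediant, hna, hnb]
  push_cast
  rw [hda', hdb', mediant, moebius]
  push_cast
  have hm : γ * ((a.num + b.num : ℚ) / (a.den + b.den)) + δ =
      (γ * (a.num + b.num) + δ * (a.den + b.den)) / (a.den + b.den) := by
    field_simp
  rw [hm, div_eq_div_iff (by linarith) (div_pos hsum (by positivity)).ne']
  field_simp
  ring

end Moebius

theorem mediant_comm (a b : ℚ) : mediant a b = mediant b a := by
  simp only [mediant, add_comm]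

theorem mediant_nonneg {a b : ℚ} (ha : 0 ≤ a) (hb : 0 ≤ b) : 0 ≤ mediant a b := by
  have : (0 : ℤ) ≤ a.num + b.num := add_nonneg (Rat.num_nonneg.mpr ha) (Rat.num_nonneg.mpr hb)
  exact div_nonneg (mod_cast this) (Nat.cast_nonneg _)

theorem mediant_one_sub (a b : ℚ) : mediant (1 - a) (1 - b) = 1 - mediant a b := by
  have h (x : ℚ) : moebius (-1) 1 0 1 x = 1 - x := by simp [moebius]; ring
  simpa only [h] using mediant_moebius (α := -1) (β := 1) (γ := 0) (δ := 1)
    (by norm_num) (by norm_num) (by norm_num)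

theorem mediant_div_add_one {a b : ℚ} (ha : 0 ≤ a) (hb : 0 ≤ b) :
    mediant (a / (a + 1)) (b / (b + 1)) = mediant a b / (mediant a b + 1) := by
  have h (x : ℚ) : moebius 1 0 1 1 x = x / (x + 1) := by simp [moebius]
  simpa only [h] using mediant_moebius (α := 1) (β := 0) (γ := 1) (δ := 1)
    (by norm_num) (by simp; linarith) (by simp; linarith)

@[simp]
theorem sb_two_mul (n k : ℕ) : sb (n + 1) (2 * k) = sb n k := by
  simp [sb]

@[simp]
theorem sb_two_mul_add_one (n k : ℕ) :
    sb (n + 1) (2 * k + 1) = mediant (sb n k) (sb n (k + 1)) := by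
  rw [sb, if_neg (by omega), show (2 * k + 1) / 2 = k by omega]

theorem sb_nonneg (n j : ℕ) : 0 ≤ sb n j := by
  induction n generalizing j with
  | zero => unfold sb; split_ifs <;> norm_num
  | succ n ih =>
    obtain ⟨k, rfl | rfl⟩ := Nat.even_or_odd' j
    · simpa using ih k
    · simpa using mediant_nonneg (ih k) (ih (k + 1))

theorem sb_two_pow_sub (n j : ℕ) (hj : j ≤ 2 ^ n) : sb n (2 ^ n - j) = 1 - sb n j := by
  induction n generalizing j with
  | zero => interval_cases j <;> simp [sb]
  | succ n ih =>
    rw [pow_succ] at hj ⊢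
    obtain ⟨k, rfl | rfl⟩ := Nat.even_or_odd' j
    · rw [show 2 ^ n * 2 - 2 * k = 2 * (2 ^ n - k) by omega, sb_two_mul, sb_two_mul,
        ih k (by omega)]
    · rw [show 2 ^ n * 2 - (2 * k + 1) = 2 * (2 ^ n - (k + 1)) + 1 by omega, sb_two_mul_add_one,
        show 2 ^ n - (k + 1) + 1 = 2 ^ n - k by omega, sb_two_mul_add_one, ih k (by omega),
        ih (k + 1) (by omega), mediant_one_sub, mediant_comm]

theorem sb_succ_of_le (n j : ℕ) (hj : j ≤ 2 ^ n) : sb (n + 1) j = sb n j / (sb n j + 1) := by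
  induction n generalizing j with
  | zero => interval_cases j <;> norm_num [sb, mediant]
  | succ n ih =>
    rw [pow_succ] at hj
    obtain ⟨k, rfl | rfl⟩ := Nat.even_or_odd' j
    · rw [sb_two_mul, sb_two_mul, ih k (by omega)]
    · rw [sb_two_mul_add_one, sb_two_mul_add_one, ih k (by omega), ih (k + 1) (by omega),
        mediant_div_add_one (sb_nonneg n k) (sb_nonneg n (k + 1))]

theorem sb_succ_two_pow_sub (n j : ℕ) (hj : j ≤ 2 ^ n) :
    sb (n + 1) (2 ^ (n + 1) - j) = 1 / (sb n j + 1) := by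
  have hnonneg := sb_nonneg n j
  rw [sb_two_pow_sub (n + 1) j (by rw [pow_succ]; omega), sb_succ_of_le n j hj]
  field_simp
  ring

theorem mem_sbNew {n : ℕ} {r : ℚ} : r ∈ sbNew n ↔ ∃ j < 2 ^ n, j % 2 = 1 ∧ sb n j = r := by
  simp [sbNew, and_assoc]

theorem sbNew_one : sbNew 1 = {1 / 2} := by
  rfl

theorem coe_sbNew_succ {n : ℕ} (hn : 1 ≤ n) :
    (sbNew (n + 1) : Set ℚ) =
      (fun x => x / (x + 1)) '' sbNew n ∪ (fun x => 1 / (x + 1)) '' sbNew n := by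
  have h2n : 2 ^ n = 2 * 2 ^ (n - 1) := by rw [← pow_succ', Nat.sub_add_cancel hn]
  have h2n1 : 2 ^ (n + 1) = 2 ^ n * 2 := pow_succ 2 n
  ext r
  simp only [Set.mem_union, Set.mem_image, Finset.mem_coe, mem_sbNew]
  constructor
  · rintro ⟨j, hj, hodd, rfl⟩
    rcases lt_or_ge j (2 ^ n) with h | h
    · exact Or.inl ⟨_, ⟨j, h, hodd, rfl⟩, (sb_succ_of_le n j h.le).symm⟩
    · refine Or.inr ⟨_, ⟨2 ^ (n + 1) - j, by omega, by omega, rfl⟩, ?_⟩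
      rw [← sb_succ_two_pow_sub n _ (by omega), Nat.sub_sub_self hj.le]
  · rintro (⟨_, ⟨j, hj, hodd, rfl⟩, rfl⟩ | ⟨_, ⟨j, hj, hodd, rfl⟩, rfl⟩)
    · exact ⟨j, by omega, hodd, sb_succ_of_le n j hj.le⟩
    · exact ⟨2 ^ (n + 1) - j, by omega, by omega, sb_succ_two_pow_sub n j hj.le⟩

def IsCFExpansion (L : List ℕ) : Prop :=
  L ≠ [] ∧ (∀ a ∈ L, 1 ≤ a) ∧ 2 ≤ L.getLastD 0

theorem isCFExpansion_one_cons {L : List ℕ} : IsCFExpansion (1 :: L) ↔ IsCFExpansion L := by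
  cases L <;> simp [IsCFExpansion]

theorem IsCFExpansion.succ_head {a : ℕ} {L : List ℕ} (h : IsCFExpansion (a :: L)) :
    IsCFExpansion ((a + 1) :: L) := by
  cases L <;> simp_all [IsCFExpansion]

theorem IsCFExpansion.of_succ_head {a : ℕ} {L : List ℕ} (h : IsCFExpansion ((a + 1) :: L))
    (ha : 1 ≤ a) (hL : L ≠ [] ∨ 2 ≤ a) : IsCFExpansion (a :: L) := by
  cases L <;> simp_all [IsCFExpansion]

theorem cfVal_nonneg : ∀ L : List ℕ, 0 ≤ cfVal L
  | [] => le_rfl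
  | a :: L => by
    have := cfVal_nonneg L
    rw [cfVal]
    positivity

theorem cfVal_one_cons (L : List ℕ) : cfVal (1 :: L) = 1 / (cfVal L + 1) := by
  rw [cfVal, Nat.cast_one, add_comm]

theorem cfVal_succ_cons {a : ℕ} (ha : 0 < a) (L : List ℕ) :
    cfVal ((a + 1) :: L) = cfVal (a :: L) / (cfVal (a :: L) + 1) := by
  have hc := cfVal_nonneg L
  have h₀ : (a : ℚ) + cfVal L ≠ 0 := by positivity
  have h₁ : (a : ℚ) + 1 + cfVal L ≠ 0 := by positivity
  simp only [cfVal]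
  push_cast
  field_simp
  ring

def cfWithSum (m : ℕ) : Set ℚ :=
  cfVal '' {L | IsCFExpansion L ∧ L.sum = m}

theorem cfWithSum_two : cfWithSum 2 = {1 / 2} := by
  have hL : ∀ L, IsCFExpansion L ∧ L.sum = 2 ↔ L = [2] := by
    rintro (_ | ⟨a, _ | ⟨b, _ | ⟨c, t⟩⟩⟩) <;> simp [IsCFExpansion] <;> omega
  simp [cfWithSum, hL, cfVal]

theorem cfWithSum_succ {m : ℕ} (hm : 2 ≤ m) :
    cfWithSum (m + 1) =
      (fun x => x / (x + 1)) '' cfWithSum m ∪ (fun x => 1 / (x + 1)) '' cfWithSum m := by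
  ext r
  simp only [cfWithSum, Set.mem_union, Set.image_image, Set.mem_image, Set.mem_ofPred_eq]
  constructor
  · rintro ⟨_ | ⟨a, L⟩, ⟨hL, hsum⟩, rfl⟩
    · exact absurd rfl hL.1
    rw [List.sum_cons] at hsum
    obtain rfl | ⟨b, rfl, hb⟩ : a = 1 ∨ ∃ b, a = b + 1 ∧ 1 ≤ b := by
      have := hL.2.1 a List.mem_cons_self
      rcases a with _ | _ | b <;> simp_all
    · exact Or.inr ⟨L, ⟨isCFExpansion_one_cons.mp hL, by omega⟩, (cfVal_one_cons L).symm⟩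
    · have hL' : L ≠ [] ∨ 2 ≤ b := by
        rcases L with _ | _
        · simp at hsum; omega
        · simp
      exact Or.inl ⟨b :: L, ⟨hL.of_succ_head hb hL', by simp; omega⟩,
        (cfVal_succ_cons hb L).symm⟩
  · rintro (⟨_ | ⟨a, L⟩, ⟨hL, hsum⟩, rfl⟩ | ⟨L, ⟨hL, hsum⟩, rfl⟩)
    · exact absurd rfl hL.1
    · exact ⟨(a + 1) :: L, ⟨hL.succ_head, by simp at hsum ⊢; omega⟩,
        cfVal_succ_cons (hL.2.1 a List.mem_cons_self) L⟩
    · exact ⟨1 :: L, ⟨isCFExpansion_one_cons.mpr hL, by simp; omega⟩, cfVal_one_cons L⟩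

theorem coe_sbNew_eq_cfWithSum {n : ℕ} (hn : 1 ≤ n) : (sbNew n : Set ℚ) = cfWithSum (n + 1) := by
  induction n, hn using Nat.le_induction with
  | base => rw [sbNew_one, cfWithSum_two, Finset.coe_singleton]
  | succ n hn ih => rw [coe_sbNew_succ hn, ih, cfWithSum_succ (m := n + 1) (by omega)]

/-- For every `n ≥ 1`, `W_n` equals the set of rationals `ξ = [0; a_1, ..., a_t]`
(finite continued fraction with positive integer partial quotients and `a_t ≥ 2`)
such that `a_1 + ... + a_t = n + 1`. -/
theorem sbNew_eq_cf_sum (n : ℕ) (hn : 1 ≤ n) (r : ℚ) :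
    r ∈ sbNew n ↔
      ∃ L : List ℕ, L ≠ [] ∧ (∀ a ∈ L, 1 ≤ a) ∧ 2 ≤ L.getLastD 0 ∧
        L.sum = n + 1 ∧ r = cfVal L := by
  rw [← Finset.mem_coe, coe_sbNew_eq_cfWithSum hn]
  simp [cfWithSum, IsCFExpansion, and_assoc, eq_comm]
end

section
/- Let m be the inverse of the Minkowski question mark function and ρ(x) = {x} − 1/2. Then for all n ≥ 1: |∫_0^1 ρ(2^n x)(x − m(x)) dx| ≤ 2^{−n}. -/
open scoped Classical in
/-- The inverse `m` of the Minkowski question mark function, characterized by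
`m(j/2^n) = ξ_{j,n}`:  `m(x) = sup { ξ_{j,n} : j/2^n ≤ x }`. -/
noncomputable def minkowskiInv (x : ℝ) : ℝ :=
  sSup {y : ℝ | ∃ n j : ℕ, j ≤ 2 ^ n ∧ ((j : ℝ) / 2 ^ n ≤ x) ∧ y = (sb n j : ℝ)}

/-- `ρ(x) = {x} − 1/2`, where `{x}` is the fractional part of `x`. -/
noncomputable def rho (x : ℝ) : ℝ := Int.fract x - 1 / 2

open MeasureTheory intervalIntegral Set

lemma mediant_mem_Icc {a b : ℚ} (ha : a ∈ Icc 0 1) (hb : b ∈ Icc 0 1) :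
    mediant a b ∈ Icc 0 1 := by
  have hna : (0 : ℚ) ≤ a.num := mod_cast Rat.num_nonneg.2 ha.1
  have hnb : (0 : ℚ) ≤ b.num := mod_cast Rat.num_nonneg.2 hb.1
  have hla : (a.num : ℚ) ≤ a.den := mod_cast Rat.num_le_denom_iff.2 ha.2
  have hlb : (b.num : ℚ) ≤ b.den := mod_cast Rat.num_le_denom_iff.2 hb.2
  have hden : (0 : ℚ) < ((a.den + b.den : ℕ) : ℚ) := by positivity
  refine ⟨div_nonneg (by push_cast; linarith) hden.le, (div_le_one hden).2 ?_⟩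
  push_cast
  linarith

lemma sb_mem_Icc (n j : ℕ) : sb n j ∈ Icc 0 1 := by
  induction n generalizing j with
  | zero => by_cases h : j = 0 <;> simp [sb, h]
  | succ n ih =>
    unfold sb
    split_ifs
    exacts [ih _, mediant_mem_Icc (ih _) (ih _)]

lemma bddAbove_minkowskiInv_set (x : ℝ) :
    BddAbove {y : ℝ | ∃ n j : ℕ, j ≤ 2 ^ n ∧ (j : ℝ) / 2 ^ n ≤ x ∧ y = (sb n j : ℝ)} :=
  ⟨1, by rintro _ ⟨n, j, -, -, rfl⟩; exact_mod_cast (sb_mem_Icc n j).2⟩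

lemma minkowskiInv_nonneg (x : ℝ) : 0 ≤ minkowskiInv x :=
  Real.sSup_nonneg <| by rintro _ ⟨n, j, -, -, rfl⟩; exact_mod_cast (sb_mem_Icc n j).1

lemma minkowskiInv_le_one (x : ℝ) : minkowskiInv x ≤ 1 :=
  Real.sSup_le (by rintro _ ⟨n, j, -, -, rfl⟩; exact_mod_cast (sb_mem_Icc n j).2) zero_le_one

lemma minkowskiInv_monotone : Monotone minkowskiInv := by
  intro x y hxy
  refine Real.sSup_le ?_ (minkowskiInv_nonneg y)
  rintro _ ⟨n, j, hj, hjx, rfl⟩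
  exact le_csSup (bddAbove_minkowskiInv_set y) ⟨n, j, hj, hjx.trans hxy, rfl⟩

lemma measurable_rho : Measurable rho := measurable_fract.sub measurable_const

lemma abs_rho_le (x : ℝ) : |rho x| ≤ 1 / 2 := by
  rw [rho, abs_le]
  constructor <;> linarith [Int.fract_nonneg x, Int.fract_lt_one x]

lemma rho_periodic : Function.Periodic rho 1 := fun x => by simp [rho]

lemma integral_rho_zero_one : ∫ u in (0 : ℝ)..1, rho u = 0 := by
  have h : ∫ u in (0 : ℝ)..1, rho u = ∫ u in (0 : ℝ)..1, (u - 1 / 2) := by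
    simp only [integral_of_le zero_le_one, integral_Ioc_eq_integral_Ioo]
    refine setIntegral_congr_fun measurableSet_Ioo fun u hu => ?_
    rw [rho, Int.fract_eq_self.2 ⟨hu.1.le, hu.2⟩]
  rw [h, integral_sub intervalIntegrable_id intervalIntegrable_const, integral_id,
    intervalIntegral.integral_const]
  norm_num

lemma integral_rho_add_one (a : ℝ) : ∫ u in a..a + 1, rho u = 0 := by
  rw [rho_periodic.intervalIntegral_add_eq a 0, zero_add, integral_rho_zero_one]

lemma integral_rho_comp_mul_left {N : ℝ} (hN : N ≠ 0) (a : ℝ) :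
    ∫ x in a / N..(a + 1) / N, rho (N * x) = 0 := by
  rw [integral_comp_mul_left rho hN, mul_div_cancel₀ _ hN, mul_div_cancel₀ _ hN,
    integral_rho_add_one, smul_zero]

lemma intervalIntegrable_of_norm_le {E : Type*} [NormedAddCommGroup E] {f : ℝ → E} {C : ℝ}
    (hf : AEStronglyMeasurable f) (hfC : ∀ x, ‖f x‖ ≤ C) (a b : ℝ) :
    IntervalIntegrable f volume a b :=
  intervalIntegrable_iff.2 <|
    Measure.integrableOn_of_bounded measure_Ioc_lt_top.ne hf (ae_of_all _ hfC)

lemma IntervalIntegrable.bdd_mul {f g : ℝ → ℝ} {a b C : ℝ} (hg : IntervalIntegrable g volume a b)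
    (hf : AEStronglyMeasurable f) (hfC : ∀ x, ‖f x‖ ≤ C) :
    IntervalIntegrable (fun x => f x * g x) volume a b :=
  ⟨hg.1.bdd_mul hf.restrict (ae_of_all _ hfC), hg.2.bdd_mul hf.restrict (ae_of_all _ hfC)⟩

lemma abs_integral_mul_le_of_integral_eq_zero {f g : ℝ → ℝ} {a b c C D : ℝ}
    (hf : IntervalIntegrable f volume a b)
    (hfg : IntervalIntegrable (fun x => f x * g x) volume a b)
    (hf₀ : ∫ x in a..b, f x = 0) (hfC : ∀ x ∈ uIoc a b, |f x| ≤ C)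
    (hgD : ∀ x ∈ uIoc a b, |g x - c| ≤ D) :
    |∫ x in a..b, f x * g x| ≤ C * D * |b - a| := by
  have hshift : ∫ x in a..b, f x * g x = ∫ x in a..b, f x * (g x - c) := by
    simp only [mul_sub]
    rw [integral_sub hfg (hf.mul_const c), intervalIntegral.integral_mul_const, hf₀, zero_mul, sub_zero]
  rw [hshift, ← Real.norm_eq_abs]
  refine norm_integral_le_of_norm_le_const fun x hx => ?_
  rw [Real.norm_eq_abs, abs_mul]
  exact mul_le_mul (hfC x hx) (hgD x hx) (abs_nonneg _) ((abs_nonneg _).trans (hfC x hx))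

lemma abs_sub_sub_le_of_monotone {m : ℝ → ℝ} (hm : Monotone m) {a b x : ℝ}
    (hax : a ≤ x) (hxb : x ≤ b) :
    |(x - m x) - (a - m a)| ≤ (b - a) + (m b - m a) := by
  have := hm hax
  have := hm hxb
  rw [abs_sub_le_iff]
  constructor <;> linarith

theorem abs_integral_rho_mul_sub_le {m : ℝ → ℝ} (hm : Monotone m) {N : ℕ} (hN : 0 < N) :
    |∫ x in (0 : ℝ)..1, rho (N * x) * (x - m x)| ≤ (1 + (m 1 - m 0)) / (2 * N) := by
  have hN' : (0 : ℝ) < N := Nat.cast_pos.2 hN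
  set a : ℕ → ℝ := fun k => k / N with ha
  have hρN : AEStronglyMeasurable fun x : ℝ => rho (N * x) :=
    (measurable_rho.comp (measurable_const_mul _)).aestronglyMeasurable
  have hρN_le (x : ℝ) : ‖rho (N * x)‖ ≤ 1 / 2 := abs_rho_le _
  have hint (k : ℕ) :
      IntervalIntegrable (fun x => rho (N * x) * (x - m x)) volume (a k) (a (k + 1)) :=
    (intervalIntegrable_id.sub hm.intervalIntegrable).bdd_mul hρN hρN_le
  have hpiece (k : ℕ) : |∫ x in a k..a (k + 1), rho (N * x) * (x - m x)|
      ≤ 1 / (2 * N) * (1 / N + (m (a (k + 1)) - m (a k))) := by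
    have hlen : a (k + 1) - a k = 1 / N := by simp only [ha]; push_cast; ring
    have hle : a k ≤ a (k + 1) := by rw [← sub_nonneg, hlen]; positivity
    have h := abs_integral_mul_le_of_integral_eq_zero (c := a k - m (a k))
      (intervalIntegrable_of_norm_le hρN hρN_le _ _) (hint k)
      (by simpa only [ha, Nat.cast_succ] using integral_rho_comp_mul_left hN'.ne' k)
      (fun x _ => abs_rho_le _)
      (fun x hx => by
        rw [uIoc_of_le hle] at hx
        exact abs_sub_sub_le_of_monotone hm hx.1.le hx.2)
    rw [hlen, abs_of_pos (a := 1 / (N : ℝ)) (by positivity)] at h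
    exact h.trans_eq (by ring)
  have h0 : a 0 = 0 := by simp [ha]
  have h1 : a N = 1 := div_self hN'.ne'
  calc |∫ x in (0 : ℝ)..1, rho (N * x) * (x - m x)|
      = |∑ k ∈ Finset.range N, ∫ x in a k..a (k + 1), rho (N * x) * (x - m x)| := by
        rw [sum_integral_adjacent_intervals fun k _ => hint k, h0, h1]
    _ ≤ ∑ k ∈ Finset.range N, 1 / (2 * N) * (1 / N + (m (a (k + 1)) - m (a k))) :=
        (Finset.abs_sum_le_sum_abs _ _).trans (Finset.sum_le_sum fun k _ => hpiece k)
    _ = (1 + (m 1 - m 0)) / (2 * N) := by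
        rw [← Finset.mul_sum, Finset.sum_add_distrib, Finset.sum_range_sub (fun k => m (a k)),
          Finset.sum_const, Finset.card_range, nsmul_eq_mul, h0, h1]
        field_simp

theorem abs_integral_rho_le_general (n : ℕ) :
    |∫ x in (0 : ℝ)..1, rho (2 ^ n * x) * (x - minkowskiInv x)| ≤ 1 / 2 ^ n := by
  have h := abs_integral_rho_mul_sub_le minkowskiInv_monotone (N := 2 ^ n) (by positivity)
  push_cast at h
  refine h.trans ?_
  calc (1 + (minkowskiInv 1 - minkowskiInv 0)) / (2 * 2 ^ n)
      ≤ 2 / (2 * 2 ^ n) := by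
        gcongr
        linarith [minkowskiInv_le_one 1, minkowskiInv_nonneg 0]
    _ = 1 / 2 ^ n := by field_simp

/-- For all `n ≥ 1`: `|∫_0^1 ρ(2^n x)(x − m(x)) dx| ≤ 2^{−n}`, where `m` is the
inverse of the Minkowski question mark function and `ρ(x) = {x} − 1/2`. -/
theorem abs_integral_rho_le (n : ℕ) (hn : 1 ≤ n) :
    |∫ x in (0 : ℝ)..1, rho (2 ^ n * x) * (x - minkowskiInv x)| ≤ 1 / 2 ^ n :=
  abs_integral_rho_le_general n
end
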